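/- arXiv:2208.06288 — 3 statements merged into one kernel-verified Lean document; each statement's English description precedes it below -/
import Mathlib

section
/- A nonempty compact Hausdorff space X is a continuous open image of a π-space if and only if X has a countable π-base and the cardinality of X is at most the continuum 2^{ℵ₀}. -/
/-!
The members of an open Souslin scheme witnessing that `Y` is a π-space form a countable π-base,
and a continuous open surjection carries a π-base of `Y` to one of `X`. Sending a branch to
the unique point of its fruit maps `ℕ^ℕ` onto `Y`, so `|X| ≤ |Y| ≤ 𝔠`.

Conversely, let `X` be compact Hausdorff with a countable π-base `γ` and `|X| ≤ 𝔠`. Every nonempty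
σ-compact open set `G` is covered by countably many such sets with closures inside `G`, among
them one inside each member of `γ` contained in `G`. Iterating this splitting, with every child
repeated under every label in `ℕ`, gives a scheme `V` whose fruits are nonempty by compactness.
As `|X| ≤ 𝔠`, each point of `V a` has a code `q ∈ ℕ^ℕ`, and a branch through `a` can spell `q`
in its labels; this yields `f : ℕ^ℕ → X` with `f (S_a) = V_a` for all `a`. Refining the topology
of `ℕ^ℕ` by the `f`-preimages of open sets makes `ℕ^ℕ` a π-space, witnessed by the cylinders,
and `f` a continuous open surjection, since `f (f⁻¹ U ∩ S_a) = U ∩ V_a`.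
-/

open Set Topology

namespace PiSpacePaper

/-- The restriction `p↾n` of `p : ℕ → ℕ`, as a list of length `n`. -/
def restrictSeq (p : ℕ → ℕ) (n : ℕ) : List ℕ := (List.range n).map p

/-- The basic clopen set `S_a` of the Baire space. -/
def cyl (a : List ℕ) : Set (ℕ → ℕ) := {p | restrictSeq p a.length = a}

/-- The fruit `⋂ n, V (p↾n)` of a branch `p` in a Souslin scheme `V`. -/
def fruit {X : Type*} (V : List ℕ → Set X) (p : ℕ → ℕ) : Set X :=
  ⋂ n : ℕ, V (restrictSeq p n)

/-- A Souslin scheme `V` covers the set `s`. -/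
def Covers {X : Type*} (V : List ℕ → Set X) (s : Set X) : Prop :=
  V [] = s ∧ ∀ a : List ℕ, V a = ⋃ n : ℕ, V (a ++ [n])

/-- A Souslin scheme `V` partitions the set `s`. -/
def Partitions {X : Type*} (V : List ℕ → Set X) (s : Set X) : Prop :=
  Covers V s ∧ ∀ (a : List ℕ) (n m : ℕ), n ≠ m → V (a ++ [n]) ∩ V (a ++ [m]) = ∅

/-- A Souslin scheme is complete iff all fruits are nonempty. -/
def Complete {X : Type*} (V : List ℕ → Set X) : Prop :=
  ∀ p : ℕ → ℕ, (fruit V p).Nonempty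

/-- A Souslin scheme has strict branches iff every fruit is a singleton. -/
def StrictBranches {X : Type*} (V : List ℕ → Set X) : Prop :=
  ∀ p : ℕ → ℕ, ∃ x : X, fruit V p = {x}

/-- A Souslin scheme is open iff all its members are open sets. -/
def OpenScheme {X : Type*} [TopologicalSpace X] (V : List ℕ → Set X) : Prop :=
  ∀ a : List ℕ, IsOpen (V a)

/-- `flesh V = ⋃ a, V a`. -/
def flesh {X : Type*} (V : List ℕ → Set X) : Set X := ⋃ a : List ℕ, V a

/-- `branches V x = {q ∈ ℕ^ℕ : x ∈ fruit V q}`. -/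
def branches {X : Type*} (V : List ℕ → Set X) (x : X) : Set (ℕ → ℕ) :=
  {q | x ∈ fruit V q}

/-- A family `γ` of subsets is a π-net for a space: all members are nonempty and every
nonempty open set contains a member. -/
def IsPiNet {X : Type*} [TopologicalSpace X] (γ : Set (Set X)) : Prop :=
  (∀ G ∈ γ, G.Nonempty) ∧
  ∀ U : Set X, IsOpen U → U.Nonempty → ∃ G ∈ γ, G ⊆ U

/-- A family `γ` of subsets is a π-base for a space: all members are nonempty open sets
and every nonempty open set contains a member. -/
def IsPiBase {X : Type*} [TopologicalSpace X] (γ : Set (Set X)) : Prop :=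
  (∀ G ∈ γ, IsOpen G ∧ G.Nonempty) ∧
  ∀ U : Set X, IsOpen U → U.Nonempty → ∃ G ∈ γ, G ⊆ U

/-- A π-space: there is an open Souslin scheme that partitions the space, has strict
branches, and whose family of members is a π-base. -/
def IsPiSpace (X : Type*) [TopologicalSpace X] : Prop :=
  ∃ V : List ℕ → Set X, OpenScheme V ∧ Partitions V Set.univ ∧ StrictBranches V ∧
    IsPiBase {S : Set X | ∃ a : List ℕ, S = V a}

/-- A Lusin π-base for a space. -/
def IsLusinPiBase {X : Type*} [TopologicalSpace X] (V : List ℕ → Set X) : Prop :=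
  OpenScheme V ∧ Partitions V Set.univ ∧ StrictBranches V ∧
  ∀ (x : X) (U : Set X), IsOpen U → x ∈ U →
    ∃ (a : List ℕ) (n : ℕ), x ∈ V a ∧ (⋃ i : ℕ, ⋃ _ : n ≤ i, V (a ++ [i])) ⊆ U

/-- A map is quasi-open iff the image of every nonempty open set has nonempty interior. -/
def IsQuasiOpen {X Y : Type*} [TopologicalSpace X] [TopologicalSpace Y] (f : X → Y) : Prop :=
  ∀ U : Set X, IsOpen U → U.Nonempty → (interior (f '' U)).Nonempty

/-- A π-net Souslin scheme on a space `X`: for every finite sequence `a`, the family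
`{V b : b ⊒ a}` is a π-net for the subspace `V a` of `X` (whose nonempty open sets are
exactly the nonempty sets `U ∩ V a` with `U` open in `X`). -/
def IsPiNetScheme {X : Type*} [TopologicalSpace X] (V : List ℕ → Set X) : Prop :=
  ∀ a : List ℕ,
    (∀ b : List ℕ, a <+: b → (V b).Nonempty) ∧
    ∀ U : Set X, IsOpen U → (U ∩ V a).Nonempty → ∃ b : List ℕ, a <+: b ∧ V b ⊆ U ∩ V a

/-- A π-base Souslin scheme on a space is an open π-net Souslin scheme. -/
def IsPiBaseScheme {X : Type*} [TopologicalSpace X] (V : List ℕ → Set X) : Prop :=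
  OpenScheme V ∧ IsPiNetScheme V

/-- A selector on a Souslin scheme `V`: a surjection of the Baire space onto `flesh V`
such that every fiber `f⁻¹(x)` is a dense subset of the subspace `branches V x` of the
Baire space. -/
def IsSelector {X : Type*} (V : List ℕ → Set X) (f : (ℕ → ℕ) → X) : Prop :=
  Set.range f = flesh V ∧
  ∀ x ∈ flesh V, f ⁻¹' {x} ⊆ branches V x ∧ branches V x ⊆ closure (f ⁻¹' {x})

/-- The topology `σ_{τ,f}` on the Baire space, generated by the subbase consisting of the
`τ`-preimages under `f` together with the basic sets `S_a`. -/
def sigmaTop {X : Type*} [TopologicalSpace X] (f : (ℕ → ℕ) → X) :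
    TopologicalSpace (ℕ → ℕ) :=
  TopologicalSpace.generateFrom
    ({S : Set (ℕ → ℕ) | ∃ U : Set X, IsOpen U ∧ S = f ⁻¹' U} ∪
      {S : Set (ℕ → ℕ) | ∃ a : List ℕ, S = cyl a})

/-- The Souslin scheme `V^g`, where `V^g_a = V_{g ∘ a}`. -/
def schemeComp {X : Type*} (V : List ℕ → Set X) (g : ℕ → ℕ) : List ℕ → Set X :=
  fun a => V (a.map g)

/-- A subset of the Baire space is dense-in-itself iff it has no isolated points. -/
def DenseInItself (B : Set (ℕ → ℕ)) : Prop :=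
  ∀ q ∈ B, q ∈ closure (B \ {q})

/-- `X` is a continuous open image of a π-space. -/
def IsContinuousOpenImageOfPiSpace (X : Type) [TopologicalSpace X] : Prop :=
  ∃ (Y : Type) (_ : TopologicalSpace Y) (f : Y → X),
    IsPiSpace Y ∧ Continuous f ∧ IsOpenMap f ∧ Function.Surjective f

/-- The topology `τ_N` on the Baire space generated by the sets `U \ A` with `U` open in
the Baire space and `A` nowhere dense in the Baire space. -/
def tauN : TopologicalSpace (ℕ → ℕ) :=
  TopologicalSpace.generateFrom
    {S : Set (ℕ → ℕ) | ∃ U A : Set (ℕ → ℕ), IsOpen U ∧ IsNowhereDense A ∧ S = U \ A}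

section BaireSpace

lemma restrictSeq_length (p : ℕ → ℕ) (n : ℕ) : (restrictSeq p n).length = n := by
  simp [restrictSeq]

lemma restrictSeq_succ (p : ℕ → ℕ) (n : ℕ) :
    restrictSeq p (n + 1) = restrictSeq p n ++ [p n] := by
  simp [restrictSeq, List.range_succ]

lemma mem_cyl_restrictSeq {p q : ℕ → ℕ} {n : ℕ} :
    q ∈ cyl (restrictSeq p n) ↔ ∀ i < n, q i = p i := by
  simp [cyl, restrictSeq, List.map_inj_left]

lemma mem_cyl_of_getElem {p : ℕ → ℕ} {a : List ℕ}
    (h : ∀ i (hi : i < a.length), p i = a[i]) : p ∈ cyl a :=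
  List.ext_getElem (restrictSeq_length p _) fun i _ hi => by simp [restrictSeq, h i hi]

lemma restrictSeq_mem_cyl (p : ℕ → ℕ) (n : ℕ) : p ∈ cyl (restrictSeq p n) :=
  mem_cyl_restrictSeq.2 fun _ _ => rfl

lemma cyl_restrictSeq_subset {p : ℕ → ℕ} {a : List ℕ} (hp : p ∈ cyl a) {n : ℕ}
    (hn : a.length ≤ n) : cyl (restrictSeq p n) ⊆ cyl a := by
  rw [← show restrictSeq p a.length = a from hp]
  exact fun q hq => mem_cyl_restrictSeq.2 fun i hi => mem_cyl_restrictSeq.1 hq i (by omega)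

lemma cyl_nonempty (a : List ℕ) : (cyl a).Nonempty :=
  ⟨fun i => a.getD i 0, mem_cyl_of_getElem fun i hi => by simp [hi]⟩

lemma cyl_nil : cyl ([] : List ℕ) = univ :=
  eq_univ_of_forall fun _ => rfl

lemma mem_cyl_append_singleton {p : ℕ → ℕ} {a : List ℕ} {n : ℕ} :
    p ∈ cyl (a ++ [n]) ↔ p ∈ cyl a ∧ p a.length = n := by
  simp [cyl, restrictSeq_succ]

lemma cyl_append_singleton_subset (a : List ℕ) (n : ℕ) : cyl (a ++ [n]) ⊆ cyl a :=
  fun _ hp => (mem_cyl_append_singleton.1 hp).1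

lemma partitions_cyl : Partitions cyl univ := by
  refine ⟨⟨cyl_nil, fun a => ?_⟩, fun a n m hnm => ?_⟩
  · ext p
    simp [mem_cyl_append_singleton]
  · ext p
    simp only [mem_inter_iff, mem_cyl_append_singleton, mem_empty_iff_false, iff_false]
    rintro ⟨⟨-, rfl⟩, -, rfl⟩
    exact hnm rfl

lemma strictBranches_cyl : StrictBranches cyl := by
  refine fun p => ⟨p, ext fun q => ?_⟩
  simp only [fruit, mem_iInter, mem_cyl_restrictSeq, mem_singleton_iff]
  exact ⟨fun h => funext fun i => h (i + 1) i (lt_add_one i), fun h _ _ _ => h ▸ rfl⟩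

lemma exists_mem_cyl_branch {Q : List ℕ → Prop} {P : List ℕ → ℕ → Prop}
    (hstep : ∀ b, Q b → ∃ n, P b n ∧ Q (b ++ [n])) {a : List ℕ} (ha : Q a) :
    ∃ p ∈ cyl a, ∀ i, Q (restrictSeq p (a.length + i)) ∧
      P (restrictSeq p (a.length + i)) (p (a.length + i)) := by
  choose next hnext using hstep
  let s : ℕ → {b // Q b} := fun i =>
    Nat.rec ⟨a, ha⟩ (fun _ b => ⟨b.1 ++ [next b.1 b.2], (hnext b.1 b.2).2⟩) i
  let p : ℕ → ℕ := fun m =>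
    if h : m < a.length then a[m] else next (s (m - a.length)).1 (s (m - a.length)).2
  have hpa : p ∈ cyl a := mem_cyl_of_getElem fun i hi => by simp [p, hi]
  have hp : ∀ i, p (a.length + i) = next (s i).1 (s i).2 := fun i => by simp [p]
  have hs : ∀ i, restrictSeq p (a.length + i) = (s i).1 := by
    intro i
    induction i with
    | zero => exact hpa
    | succ i ih => rw [← add_assoc, restrictSeq_succ, ih, hp]
  exact ⟨p, hpa, fun i => by rw [hs i, hp i]; exact ⟨(s i).2, (hnext _ _).1⟩⟩

end BaireSpace

section Fruits

variable {X : Type*} {V : List ℕ → Set X}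

lemma fruit_subset_of_mem_cyl {p : ℕ → ℕ} {a : List ℕ} (hp : p ∈ cyl a) :
    fruit V p ⊆ V a := by
  rw [← show restrictSeq p a.length = a from hp]
  exact iInter_subset _ _

lemma mem_fruit_of_forall_add (hV : ∀ a n, V (a ++ [n]) ⊆ V a) {p : ℕ → ℕ} {x : X} (N : ℕ)
    (h : ∀ i, x ∈ V (restrictSeq p (N + i))) : x ∈ fruit V p := by
  have hanti : Antitone fun n => V (restrictSeq p n) :=
    antitone_nat_of_succ_le fun n => by rw [restrictSeq_succ]; exact hV _ _
  exact mem_iInter.2 fun n => hanti (Nat.le_add_left n N) (h n)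

lemma exists_mem_fruit_of_covers (hV : Covers V univ) (x : X) : ∃ p, x ∈ fruit V p := by
  obtain ⟨p, -, hp⟩ := exists_mem_cyl_branch (Q := fun b => x ∈ V b) (P := fun _ _ => True)
    (fun b hb => by simpa [hV.2 b] using hb) (a := []) (by simp [hV.1])
  exact ⟨p, mem_iInter.2 fun n => by simpa using (hp n).1⟩

end Fruits

lemma cardinal_mk_baire : Cardinal.mk (ℕ → ℕ) = Cardinal.continuum := by
  simp [Cardinal.aleph0_power_aleph0]

lemma mk_le_continuum_of_strictBranches {X : Type} {V : List ℕ → Set X} (hV : Covers V univ)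
    (hs : StrictBranches V) : Cardinal.mk X ≤ Cardinal.continuum := by
  choose g hg using hs
  have hg_surj : Function.Surjective g := fun x =>
    (exists_mem_fruit_of_covers hV x).imp fun p hp => by rw [hg p] at hp; exact hp.symm
  exact cardinal_mk_baire ▸ Cardinal.mk_le_of_surjective hg_surj

lemma IsPiBase.image {X Y : Type*} [TopologicalSpace X] [TopologicalSpace Y] {f : Y → X}
    (hc : Continuous f) (ho : IsOpenMap f) (hs : Function.Surjective f) {γ : Set (Set Y)}
    (hγ : IsPiBase γ) : IsPiBase (image f '' γ) := by
  refine ⟨?_, fun U hU hne => ?_⟩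
  · rintro _ ⟨G, hG, rfl⟩
    exact ⟨ho G (hγ.1 G hG).1, (hγ.1 G hG).2.image f⟩
  · obtain ⟨G, hG, hGU⟩ := hγ.2 _ (hU.preimage hc) (hne.preimage hs)
    exact ⟨f '' G, mem_image_of_mem _ hG, image_subset_iff.2 hGU⟩

lemma IsContinuousOpenImageOfPiSpace.exists_countable_isPiBase {X : Type} [TopologicalSpace X]
    (h : IsContinuousOpenImageOfPiSpace X) : ∃ γ : Set (Set X), γ.Countable ∧ IsPiBase γ := by
  obtain ⟨Y, _, f, ⟨V, -, -, -, hV⟩, hc, ho, hs⟩ := h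
  refine ⟨_, ?_, hV.image hc ho hs⟩
  refine ((countable_range V).mono ?_).image _
  rintro _ ⟨a, rfl⟩
  exact mem_range_self a

lemma IsContinuousOpenImageOfPiSpace.mk_le_continuum {X : Type} [TopologicalSpace X]
    (h : IsContinuousOpenImageOfPiSpace X) : Cardinal.mk X ≤ Cardinal.continuum := by
  obtain ⟨Y, _, f, ⟨V, -, hV, hs, -⟩, -, -, hf⟩ := h
  exact (Cardinal.mk_le_of_surjective hf).trans (mk_le_continuum_of_strictBranches hV.1 hs)

section Splitting

variable {X : Type*} [TopologicalSpace X]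

structure IsNonemptySigmaCompactOpen (G : Set X) : Prop where
  isOpen : IsOpen G
  nonempty : G.Nonempty
  isSigmaCompact : IsSigmaCompact G

structure IsSplitting (G : Set X) (D : ℕ → Set X) : Prop where
  isNonemptySigmaCompactOpen : ∀ n, IsNonemptySigmaCompactOpen (D n)
  closure_subset : ∀ n, closure (D n) ⊆ G
  subset_iUnion : G ⊆ ⋃ n, D n
  exists_subset : ∀ U, IsOpen U → (U ∩ G).Nonempty → ∃ n, D n ⊆ U

lemma exists_isNonemptySigmaCompactOpen_between [CompactSpace X] [T2Space X] {K G : Set X}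
    (hK : IsCompact K) (hKne : K.Nonempty) (hG : IsOpen G) (hKG : K ⊆ G) :
    ∃ C, IsNonemptySigmaCompactOpen C ∧ K ⊆ C ∧ closure C ⊆ G := by
  obtain ⟨g, hg0, hg1, -⟩ := exists_continuous_zero_one_of_isClosed hG.isClosed_compl
    hK.isClosed (disjoint_compl_left_iff_subset.2 hKG)
  have hIoi : ⋃ n : ℕ, Ici (1 / 2 + 1 / ((n : ℝ) + 1)) = Ioi (1 / 2) :=
    iUnion_Ici_eq_Ioi_of_lt_of_tendsto (F := Filter.atTop)
      (fun n => by simp only [lt_add_iff_pos_right]; positivity)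
      (by simpa using tendsto_const_nhds.add (tendsto_one_div_add_atTop_nhds_zero_nat (𝕜 := ℝ)))
  have hKC : K ⊆ g ⁻¹' Ioi (1 / 2) := fun x hx => by norm_num [hg1 hx]
  refine ⟨g ⁻¹' Ioi (1 / 2), ⟨isOpen_Ioi.preimage g.continuous, hKne.mono hKC, ?_⟩, hKC, ?_⟩
  · refine ⟨fun n : ℕ => g ⁻¹' Ici (1 / 2 + 1 / ((n : ℝ) + 1)),
      fun n => (isClosed_Ici.preimage g.continuous).isCompact, ?_⟩
    rw [← preimage_iUnion, hIoi]
  · refine (closure_lt_subset_le continuous_const g.continuous).trans fun x hx => ?_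
    by_contra hxG
    norm_num [hg0 hxG] at hx

lemma exists_isSplitting [CompactSpace X] [T2Space X] {γ : Set (Set X)} (hγc : γ.Countable)
    (hγ : IsPiBase γ) {G : Set X} (hG : IsNonemptySigmaCompactOpen G) :
    ∃ D, IsSplitting G D := by
  obtain ⟨K, hK, hKG⟩ := hG.isSigmaCompact
  obtain ⟨x₀, hx₀⟩ := hG.nonempty
  -- `x₀` keeps the children nonempty when `K j` is empty
  have hcover : ∀ j, ∃ C, IsNonemptySigmaCompactOpen C ∧ K j ∪ {x₀} ⊆ C ∧ closure C ⊆ G :=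
    fun j => exists_isNonemptySigmaCompactOpen_between ((hK j).union isCompact_singleton)
      ⟨x₀, Or.inr rfl⟩ hG.isOpen (union_subset (hKG ▸ subset_iUnion K j) (by simpa))
  have hinside : ∀ B : ↥(γ ∩ {B | B ⊆ G}),
      ∃ C, IsNonemptySigmaCompactOpen C ∧ closure C ⊆ B.1 := by
    rintro ⟨B, hBγ, -⟩
    obtain ⟨y, hy⟩ := (hγ.1 B hBγ).2
    obtain ⟨C, hC, -, hCB⟩ := exists_isNonemptySigmaCompactOpen_between isCompact_singleton
      (singleton_nonempty y) (hγ.1 B hBγ).1 (singleton_subset_iff.2 hy)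
    exact ⟨C, hC, hCB⟩
  choose Cc hCc using hcover
  choose Ci hCi using hinside
  have : Countable ↥(γ ∩ {B | B ⊆ G}) := (hγc.mono inter_subset_left).to_subtype
  obtain ⟨D, hD⟩ := ((countable_range Cc).union (countable_range Ci)).exists_eq_range
    ((range_nonempty Cc).mono subset_union_left)
  have hmem : ∀ C ∈ range Cc ∪ range Ci, ∃ n, D n = C := fun C hC => by rwa [hD] at hC
  have hD_good : ∀ n, IsNonemptySigmaCompactOpen (D n) ∧ closure (D n) ⊆ G := fun n => by
    obtain ⟨j, hj⟩ | ⟨B, hB⟩ := hD ▸ mem_range_self n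
    · exact hj ▸ ⟨(hCc j).1, (hCc j).2.2⟩
    · exact hB ▸ ⟨(hCi B).1, (hCi B).2.trans B.2.2⟩
  refine ⟨D, fun n => (hD_good n).1, fun n => (hD_good n).2, fun x hx => ?_, fun U hU hUG => ?_⟩
  · obtain ⟨j, hj⟩ := mem_iUnion.1 (hKG ▸ hx)
    obtain ⟨n, hn⟩ := hmem _ (Or.inl (mem_range_self j))
    exact mem_iUnion.2 ⟨n, hn ▸ (hCc j).2.1 (Or.inl hj)⟩
  · obtain ⟨B, hBγ, hBUG⟩ := hγ.2 _ (hU.inter hG.isOpen) hUG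
    obtain ⟨n, hn⟩ := hmem _ (Or.inr (mem_range_self ⟨B, hBγ, hBUG.trans inter_subset_right⟩))
    exact ⟨n, hn ▸ subset_closure.trans ((hCi _).2.trans (hBUG.trans inter_subset_left))⟩

end Splitting

section LabelledTree

variable {X : Type*}

/-- The second coordinate of `Nat.unpair n` is a free label: every child occurs under every
label. -/
def labelledTree (c : Set X → ℕ → Set X) (a : List ℕ) : Set X :=
  a.foldl (fun G n => c G (Nat.unpair n).1) univ

variable {c : Set X → ℕ → Set X}

lemma labelledTree_append_singleton (a : List ℕ) (n : ℕ) :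
    labelledTree c (a ++ [n]) = c (labelledTree c a) (Nat.unpair n).1 := by
  simp [labelledTree]

variable [TopologicalSpace X] [Nonempty X]

lemma isNonemptySigmaCompactOpen_labelledTree [SigmaCompactSpace X]
    (hc : ∀ G, IsNonemptySigmaCompactOpen G → IsSplitting G (c G)) (a : List ℕ) :
    IsNonemptySigmaCompactOpen (labelledTree c a) := by
  induction a using List.reverseRecOn with
  | nil => exact ⟨isOpen_univ, univ_nonempty, isSigmaCompact_univ⟩
  | append_singleton a n ih =>
    rw [labelledTree_append_singleton]
    exact (hc _ ih).isNonemptySigmaCompactOpen _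

lemma closure_labelledTree_append_singleton_subset [SigmaCompactSpace X]
    (hc : ∀ G, IsNonemptySigmaCompactOpen G → IsSplitting G (c G)) (a : List ℕ) (n : ℕ) :
    closure (labelledTree c (a ++ [n])) ⊆ labelledTree c a := by
  rw [labelledTree_append_singleton]
  exact (hc _ (isNonemptySigmaCompactOpen_labelledTree hc a)).closure_subset _

lemma labelledTree_append_singleton_subset [SigmaCompactSpace X]
    (hc : ∀ G, IsNonemptySigmaCompactOpen G → IsSplitting G (c G)) (a : List ℕ) (n : ℕ) :
    labelledTree c (a ++ [n]) ⊆ labelledTree c a :=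
  subset_closure.trans (closure_labelledTree_append_singleton_subset hc a n)

lemma exists_label_mem_labelledTree_append_singleton [SigmaCompactSpace X]
    (hc : ∀ G, IsNonemptySigmaCompactOpen G → IsSplitting G (c G)) {a : List ℕ} {x : X}
    (hx : x ∈ labelledTree c a) (k : ℕ) :
    ∃ n, (Nat.unpair n).2 = k ∧ x ∈ labelledTree c (a ++ [n]) := by
  obtain ⟨m, hm⟩ := mem_iUnion.1
    ((hc _ (isNonemptySigmaCompactOpen_labelledTree hc a)).subset_iUnion hx)
  exact ⟨Nat.pair m k, by simp, by simpa [labelledTree_append_singleton] using hm⟩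

lemma exists_labelledTree_append_singleton_subset [SigmaCompactSpace X]
    (hc : ∀ G, IsNonemptySigmaCompactOpen G → IsSplitting G (c G)) {a : List ℕ} {U : Set X}
    (hU : IsOpen U) (hne : (U ∩ labelledTree c a).Nonempty) :
    ∃ n, labelledTree c (a ++ [n]) ⊆ U := by
  obtain ⟨m, hm⟩ :=
    (hc _ (isNonemptySigmaCompactOpen_labelledTree hc a)).exists_subset U hU hne
  exact ⟨Nat.pair m 0, by simpa [labelledTree_append_singleton] using hm⟩

lemma fruit_labelledTree_nonempty [CompactSpace X]
    (hc : ∀ G, IsNonemptySigmaCompactOpen G → IsSplitting G (c G)) (p : ℕ → ℕ) :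
    (fruit (labelledTree c) p).Nonempty := by
  let t n := closure (labelledTree c (restrictSeq p n))
  obtain ⟨x, hx⟩ := IsCompact.nonempty_iInter_of_sequence_nonempty_isCompact_isClosed t
    (fun n => closure_mono (restrictSeq_succ p n ▸ labelledTree_append_singleton_subset hc _ _))
    (fun n => (isNonemptySigmaCompactOpen_labelledTree hc _).nonempty.closure)
    isClosed_closure.isCompact (fun n => isClosed_closure)
  refine ⟨x, mem_iInter.2 fun n => ?_⟩
  have hxn : x ∈ closure (labelledTree c (restrictSeq p n ++ [p n])) :=
    restrictSeq_succ p n ▸ mem_iInter.1 hx (n + 1)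
  exact closure_labelledTree_append_singleton_subset hc _ _ hxn

end LabelledTree

section Selector

variable {X : Type*} {V : List ℕ → Set X} {ℓ : ℕ → ℕ}

def EncodesAt (ℓ : ℕ → ℕ) (p : ℕ → ℕ) (j : ℕ) (q : ℕ → ℕ) : Prop :=
  ℓ (p j) = 0 ∧ ∀ i, ℓ (p (j + 1 + i)) = q i + 1

lemma EncodesAt.unique {p q q' : ℕ → ℕ} {j j' : ℕ} (h : EncodesAt ℓ p j q)
    (h' : EncodesAt ℓ p j' q') : j = j' ∧ q = q' := by
  have hj : j = j' := by
    by_contra hne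
    rcases Nat.lt_or_gt_of_ne hne with hlt | hlt
    · have := h.2 (j' - j - 1)
      rw [show j + 1 + (j' - j - 1) = j' by omega, h'.1] at this
      omega
    · have := h'.2 (j - j' - 1)
      rw [show j' + 1 + (j - j' - 1) = j by omega, h.1] at this
      omega
  subst hj
  exact ⟨rfl, funext fun i => Nat.succ_injective ((h.2 i).symm.trans (h'.2 i))⟩

lemma exists_mem_cyl_encodesAt (hV : ∀ a n, V (a ++ [n]) ⊆ V a)
    (hℓ : ∀ a x, x ∈ V a → ∀ k, ∃ n, ℓ n = k ∧ x ∈ V (a ++ [n])) {a : List ℕ} {x : X}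
    (hx : x ∈ V a) (q : ℕ → ℕ) :
    ∃ p ∈ cyl a, x ∈ fruit V p ∧ EncodesAt ℓ p a.length q := by
  let κ : ℕ → ℕ := fun | 0 => 0 | i + 1 => q i + 1
  obtain ⟨p, hpa, hp⟩ := exists_mem_cyl_branch (Q := fun b => x ∈ V b)
    (P := fun b n => ℓ n = κ (b.length - a.length)) (fun b hb => hℓ b x hb _) hx
  simp only [restrictSeq_length, Nat.add_sub_cancel_left] at hp
  refine ⟨p, hpa, mem_fruit_of_forall_add hV a.length fun i => (hp i).1, (hp 0).2, fun i => ?_⟩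
  rw [add_assoc, add_comm 1 i]
  exact (hp (i + 1)).2

/-- A point `e q` of `V a` is the image of a branch through `a` that encodes `q` after position
`a.length`; the decoding is unambiguous by `EncodesAt.unique`. -/
lemma exists_image_cyl_eq (hV : ∀ a n, V (a ++ [n]) ⊆ V a)
    (hℓ : ∀ a x, x ∈ V a → ∀ k, ∃ n, ℓ n = k ∧ x ∈ V (a ++ [n]))
    (hfruit : ∀ p, (fruit V p).Nonempty) {e : (ℕ → ℕ) → X} (he : Function.Surjective e) :
    ∃ f : (ℕ → ℕ) → X, ∀ a, f '' cyl a = V a := by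
  classical
  choose g hg using hfruit
  let f p := if h : ∃ j q, EncodesAt ℓ p j q ∧ e q ∈ fruit V p then e h.choose_spec.choose
    else g p
  have hf : ∀ p, f p ∈ fruit V p := fun p => by
    by_cases h : ∃ j q, EncodesAt ℓ p j q ∧ e q ∈ fruit V p
    · simpa only [f, dif_pos h] using h.choose_spec.choose_spec.2
    · simpa only [f, dif_neg h] using hg p
  refine ⟨f, fun a => Subset.antisymm ?_ fun x hx => ?_⟩
  · rintro _ ⟨p, hp, rfl⟩
    exact fruit_subset_of_mem_cyl hp (hf p)
  · obtain ⟨q, rfl⟩ := he x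
    obtain ⟨p, hpa, hpx, hpq⟩ := exists_mem_cyl_encodesAt hV hℓ hx q
    have h : ∃ j q, EncodesAt ℓ p j q ∧ e q ∈ fruit V p := ⟨_, q, hpq, hpx⟩
    refine ⟨p, hpa, ?_⟩
    simp only [f, dif_pos h, ← (hpq.unique h.choose_spec.choose_spec.1).2]

end Selector

section SigmaTopology

variable {X : Type*} [TopologicalSpace X] (f : (ℕ → ℕ) → X)

lemma isOpen_sigmaTop_cyl (a : List ℕ) : IsOpen[sigmaTop f] (cyl a) :=
  .basic _ (Or.inr ⟨a, rfl⟩)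

lemma continuous_sigmaTop : Continuous[sigmaTop f, _] f :=
  continuous_def.2 fun U hU => .basic _ (Or.inl ⟨U, hU, rfl⟩)

lemma exists_preimage_inter_cyl_subset_of_isOpen_sigmaTop {O : Set (ℕ → ℕ)}
    (hO : IsOpen[sigmaTop f] O) {p : ℕ → ℕ} (hp : p ∈ O) :
    ∃ U a, IsOpen U ∧ p ∈ f ⁻¹' U ∩ cyl a ∧ f ⁻¹' U ∩ cyl a ⊆ O := by
  induction hO generalizing p with
  | basic S hS =>
    obtain ⟨U, hU, rfl⟩ | ⟨a, rfl⟩ := hS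
    · exact ⟨U, [], hU, ⟨hp, by simp [cyl_nil]⟩, inter_subset_left⟩
    · exact ⟨univ, a, isOpen_univ, ⟨trivial, hp⟩, inter_subset_right⟩
  | univ => exact ⟨univ, [], isOpen_univ, ⟨trivial, by simp [cyl_nil]⟩, subset_univ _⟩
  | inter O₁ O₂ _ _ ih₁ ih₂ =>
    obtain ⟨U₁, a₁, hU₁, ⟨hpU₁, hpa₁⟩, hsub₁⟩ := ih₁ hp.1
    obtain ⟨U₂, a₂, hU₂, ⟨hpU₂, hpa₂⟩, hsub₂⟩ := ih₂ hp.2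
    refine ⟨U₁ ∩ U₂, restrictSeq p (max a₁.length a₂.length), hU₁.inter hU₂,
      ⟨⟨hpU₁, hpU₂⟩, restrictSeq_mem_cyl p _⟩, fun q ⟨⟨hqU₁, hqU₂⟩, hq⟩ => ⟨?_, ?_⟩⟩
    · exact hsub₁ ⟨hqU₁, cyl_restrictSeq_subset hpa₁ (le_max_left _ _) hq⟩
    · exact hsub₂ ⟨hqU₂, cyl_restrictSeq_subset hpa₂ (le_max_right _ _) hq⟩
  | sUnion S _ ih =>
    obtain ⟨s, hs, hps⟩ := hp
    obtain ⟨U, a, hU, hpUa, hsub⟩ := ih s hs hps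
    exact ⟨U, a, hU, hpUa, hsub.trans (subset_sUnion_of_mem hs)⟩

variable {f} {V : List ℕ → Set X}

lemma isOpenMap_sigmaTop (hf : ∀ a, f '' cyl a = V a) (hV : ∀ a, IsOpen (V a)) :
    @IsOpenMap _ _ (sigmaTop f) _ f := by
  intro O hO
  rw [isOpen_iff_forall_mem_open]
  rintro _ ⟨p, hp, rfl⟩
  obtain ⟨U, a, hU, ⟨hpU, hpa⟩, hsub⟩ :=
    exists_preimage_inter_cyl_subset_of_isOpen_sigmaTop f hO hp
  refine ⟨U ∩ V a, ?_, hU.inter (hV a), hpU, hf a ▸ mem_image_of_mem f hpa⟩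
  rw [← hf a, ← image_preimage_inter]
  exact image_mono hsub

lemma isPiSpace_sigmaTop (hf : ∀ a, f '' cyl a = V a)
    (hV : ∀ a U, IsOpen U → (U ∩ V a).Nonempty → ∃ n, V (a ++ [n]) ⊆ U) :
    @IsPiSpace (ℕ → ℕ) (sigmaTop f) := by
  refine ⟨cyl, isOpen_sigmaTop_cyl f, partitions_cyl, strictBranches_cyl, ?_, ?_⟩
  · rintro _ ⟨a, rfl⟩
    exact ⟨isOpen_sigmaTop_cyl f a, cyl_nonempty a⟩
  · rintro O hO ⟨p, hp⟩
    obtain ⟨U, a, hU, ⟨hpU, hpa⟩, hsub⟩ :=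
      exists_preimage_inter_cyl_subset_of_isOpen_sigmaTop f hO hp
    obtain ⟨n, hn⟩ := hV a U hU ⟨f p, hpU, hf a ▸ mem_image_of_mem f hpa⟩
    refine ⟨cyl (a ++ [n]), ⟨_, rfl⟩, fun r hr => hsub ⟨?_, cyl_append_singleton_subset a n hr⟩⟩
    exact hn (hf _ ▸ mem_image_of_mem f hr)

end SigmaTopology

lemma exists_surjective_baire_of_mk_le_continuum {X : Type} [Nonempty X]
    (hX : Cardinal.mk X ≤ Cardinal.continuum) : ∃ e : (ℕ → ℕ) → X, Function.Surjective e := by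
  obtain ⟨ι⟩ := (Cardinal.le_def X (ℕ → ℕ)).1 (cardinal_mk_baire ▸ hX)
  exact ⟨Function.invFun ι, Function.invFun_surjective ι.injective⟩

lemma isContinuousOpenImageOfPiSpace_of_countable_isPiBase {X : Type} [TopologicalSpace X]
    [CompactSpace X] [T2Space X] [Nonempty X] {γ : Set (Set X)} (hγc : γ.Countable)
    (hγ : IsPiBase γ) (hX : Cardinal.mk X ≤ Cardinal.continuum) :
    IsContinuousOpenImageOfPiSpace X := by
  choose! c hc using fun G (hG : IsNonemptySigmaCompactOpen G) => exists_isSplitting hγc hγ hG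
  obtain ⟨e, he⟩ := exists_surjective_baire_of_mk_le_continuum hX
  obtain ⟨f, hf⟩ := exists_image_cyl_eq (labelledTree_append_singleton_subset hc)
    (fun _ _ hx => exists_label_mem_labelledTree_append_singleton hc hx)
    (fruit_labelledTree_nonempty hc) he
  refine ⟨ℕ → ℕ, sigmaTop f, f, isPiSpace_sigmaTop hf
    (fun _ _ hU hne => exists_labelledTree_append_singleton_subset hc hU hne),
    continuous_sigmaTop f,
    isOpenMap_sigmaTop hf fun a => (isNonemptySigmaCompactOpen_labelledTree hc a).isOpen, ?_⟩
  rw [← range_eq_univ, ← image_univ, ← cyl_nil, hf]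
  rfl

/-- A nonempty compact Hausdorff space is a continuous open image of a
π-space iff it has a countable π-base and cardinality at most the continuum. -/
theorem statement9 {X : Type} [TopologicalSpace X] [CompactSpace X] [T2Space X]
    [Nonempty X] :
    IsContinuousOpenImageOfPiSpace X ↔
    ((∃ γ : Set (Set X), γ.Countable ∧ IsPiBase γ) ∧
      Cardinal.mk X ≤ Cardinal.continuum) :=
  ⟨fun h => ⟨h.exists_countable_isPiBase, h.mk_le_continuum⟩,
    fun ⟨⟨_, hγc, hγ⟩, hX⟩ => isContinuousOpenImageOfPiSpace_of_countable_isPiBase hγc hγ hX⟩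

end PiSpacePaper
end

section
/- Let V = ⟨V_a⟩ be a Souslin scheme that covers flesh(V) and let f be a selector on V. Then f[S_a] = V_a for every finite sequence a of natural numbers. -/
open Set Topology

namespace PiSpacePaper

/-! A point `f p` lies in the fruit of `p`, hence in `V_a` when `p ∈ S_a`. Conversely, for
`x ∈ V_a` the covering property lets us extend `a` step by step inside `{b | x ∈ V_b}`, giving a
branch `q ∈ S_a` with `x` in its fruit. The fiber `f⁻¹(x)` is dense in the branches of `x`, so
the open neighbourhood `S_a` of `q` meets it. -/

lemma restrictSeq_eq_ofFn (p : ℕ → ℕ) (n : ℕ) :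
    restrictSeq p n = List.ofFn fun i : Fin n => p i := by
  apply List.ext_getElem <;> simp [restrictSeq]

lemma isOpen_cyl (a : List ℕ) : IsOpen (cyl a) := by
  have hcyl : cyl a = (fun p : ℕ → ℕ => fun i : Fin a.length => p i) ⁻¹' {v | List.ofFn v = a} := by
    ext p
    simp [cyl, restrictSeq_eq_ofFn]
  rw [hcyl]
  exact (isOpen_discrete _).preimage (by fun_prop)

/-- `fun i => (s (i + 1)).getD i 0` is the limit in the Baire space of the prefix chain `s`. -/
lemma restrictSeq_eq_take_of_prefix_chain {s : ℕ → List ℕ} (hs : ∀ k, s k <+: s (k + 1))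
    (hlen : ∀ k, k ≤ (s k).length) (n : ℕ) :
    restrictSeq (fun i => (s (i + 1)).getD i 0) n = (s n).take n := by
  refine List.ext_getElem (by simp [restrictSeq, hlen n]) fun i hi hi' => ?_
  have hin : i < n := by simpa [restrictSeq] using hi
  have hpre : s (i + 1) <+: s n := Nat.rel_of_forall_rel_succ_of_le _ hs hin
  have hi₁ : i < (s (i + 1)).length := hlen (i + 1)
  simp only [restrictSeq, List.getElem_map, List.getElem_range, List.getElem_take]
  rw [List.getD_eq_getElem _ _ hi₁]
  exact hpre.getElem hi₁

lemma exists_mem_cyl_forall_prefix {P : List ℕ → Prop} {a : List ℕ} (ha : P a)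
    (hstep : ∀ b, P b → ∃ n, P (b ++ [n])) :
    ∃ q ∈ cyl a, ∀ n, ∃ b, P b ∧ restrictSeq q n <+: b := by
  choose next hnext using hstep
  let s : ℕ → {b // P b} := fun k =>
    Nat.rec ⟨a, ha⟩ (fun _ c => ⟨c.1 ++ [next c.1 c.2], hnext c.1 c.2⟩) k
  have hs : ∀ k, (s k).1 <+: (s (k + 1)).1 := fun k => ⟨_, rfl⟩
  have hlen : ∀ k, (s k).1.length = a.length + k := by
    intro k
    induction k with
    | zero => rfl
    | succ k ih => simp [s, ih, Nat.add_assoc]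
  have hq := restrictSeq_eq_take_of_prefix_chain hs fun k => by rw [hlen]; omega
  refine ⟨_, ?_, fun n => ⟨(s n).1, (s n).2, hq n ▸ List.take_prefix n _⟩⟩
  have ha' : a <+: (s a.length).1 :=
    Nat.rel_of_forall_rel_succ_of_le (· <+: ·) (f := fun k => (s k).1) hs (Nat.zero_le _)
  exact (hq a.length).trans (List.prefix_iff_eq_take.mp ha').symm

section SouslinScheme

variable {X : Type*} {V : List ℕ → Set X} {s : Set X}

lemma Covers.antitone (hV : Covers V s) {b c : List ℕ} (h : b <+: c) : V c ⊆ V b := by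
  obtain ⟨t, rfl⟩ := h
  induction t using List.reverseRecOn with
  | nil => simp
  | append_singleton t n ih =>
    rw [← List.append_assoc]
    exact ((subset_iUnion (fun m => V (b ++ t ++ [m])) n).trans (hV.2 _).superset).trans ih

lemma Covers.exists_mem_cyl_mem_branches (hV : Covers V s) {a : List ℕ} {x : X}
    (hx : x ∈ V a) : ∃ q ∈ cyl a, q ∈ branches V x := by
  obtain ⟨q, hqa, hq⟩ := exists_mem_cyl_forall_prefix (P := fun b => x ∈ V b) hx
    fun b hb => mem_iUnion.mp (hV.2 b ▸ hb)
  refine ⟨q, hqa, mem_iInter.mpr fun n => ?_⟩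
  obtain ⟨b, hxb, hqb⟩ := hq n
  exact hV.antitone hqb hxb

lemma IsSelector.image_cyl_subset {f : (ℕ → ℕ) → X} (hf : IsSelector V f) (a : List ℕ) :
    f '' cyl a ⊆ V a := by
  rintro _ ⟨p, hp, rfl⟩
  have hp' : p ∈ branches V (f p) := (hf.2 (f p) (hf.1 ▸ mem_range_self p)).1 rfl
  exact hp ▸ mem_iInter.mp hp' a.length

lemma IsSelector.subset_image_cyl (hV : Covers V s) {f : (ℕ → ℕ) → X} (hf : IsSelector V f)
    (a : List ℕ) : V a ⊆ f '' cyl a := by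
  intro x hx
  obtain ⟨q, hqa, hq⟩ := hV.exists_mem_cyl_mem_branches hx
  have hcl : q ∈ closure (f ⁻¹' {x}) := (hf.2 x (mem_iUnion.mpr ⟨a, hx⟩)).2 hq
  obtain ⟨p, hpa, hpx⟩ := mem_closure_iff.mp hcl (cyl a) (isOpen_cyl a) hqa
  exact ⟨p, hpa, hpx⟩

end SouslinScheme

/-- If a Souslin scheme V covers flesh(V) and f is a selector on V, then
f[S_a] = V_a for every finite sequence a. -/
theorem statement12 {X : Type} (V : List ℕ → Set X) (hV : Covers V (flesh V))
    (f : (ℕ → ℕ) → X) (hf : IsSelector V f) (a : List ℕ) :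
    f '' cyl a = V a :=
  (hf.image_cyl_subset a).antisymm (hf.subset_image_cyl hV a)
end PiSpacePaper
end

section
/- Let V = ⟨V_a⟩ be a Souslin scheme, g : ℕ → ℕ a surjection, and X a topological space. Then: (a) if V covers X, then V^g covers X; (b) if V is complete, then V^g is complete; (c) if V is open on X, then V^g is open on X; (d) if V covers X and |g⁻¹(n)| ≥ 2 for every n ∈ ℕ, then for every x ∈ X the set branches_{V^g}(x) is a dense-in-itself subspace of the Baire space; (e) if V is a π-net Souslin scheme on X, then V^g is a π-net Souslin scheme on X. -/
open Set Topology

namespace PiSpacePaper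

lemma fruit_schemeComp {X : Type*} (V : List ℕ → Set X) (g : ℕ → ℕ) (p : ℕ → ℕ) :
    fruit (schemeComp V g) p = fruit V (g ∘ p) := by
  unfold fruit schemeComp restrictSeq
  simp [List.map_map]

lemma map_choose_surj {g : ℕ → ℕ} (hg : Function.Surjective g) (t : List ℕ) :
    (t.map fun n => (hg n).choose).map g = t := by
  induction t with
  | nil => simp
  | cons h t ih => simp [ih, (hg h).choose_spec]

/-- Properties of the scheme V^g for a surjection g : ℕ → ℕ. -/
theorem statement15 {X : Type} [TopologicalSpace X] (V : List ℕ → Set X) (g : ℕ → ℕ)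
    (hg : Function.Surjective g) :
    (Covers V Set.univ → Covers (schemeComp V g) Set.univ) ∧
    (Complete V → Complete (schemeComp V g)) ∧
    (OpenScheme V → OpenScheme (schemeComp V g)) ∧
    ((Covers V Set.univ ∧ ∀ n : ℕ, 2 ≤ Cardinal.mk (g ⁻¹' {n})) →
      ∀ x : X, DenseInItself (branches (schemeComp V g) x)) ∧
    (IsPiNetScheme V → IsPiNetScheme (schemeComp V g)) := by
  refine ⟨?_, ?_, ?_, ?_, ?_⟩
  · rintro ⟨h0, hsucc⟩
    refine ⟨by simpa [schemeComp] using h0, fun a => ?_⟩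
    unfold schemeComp
    ext x
    simp only [mem_iUnion]
    constructor
    · intro hx
      rw [hsucc (a.map g)] at hx
      simp only [mem_iUnion] at hx
      obtain ⟨m, hm⟩ := hx
      obtain ⟨n, rfl⟩ := hg m
      exact ⟨n, by simpa using hm⟩
    · rintro ⟨n, hn⟩
      rw [hsucc (a.map g)]
      simp only [mem_iUnion]
      exact ⟨g n, by simpa using hn⟩
  · intro h p
    rw [fruit_schemeComp]
    exact h (g ∘ p)
  · intro h a
    exact h (a.map g)
  · rintro ⟨-, hcard⟩ x q hq
    have key : ∀ k : ℕ, ∃ m, m ≠ q k ∧ g m = g (q k) := by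
      intro k
      have h2 : 2 ≤ Cardinal.mk (g ⁻¹' {g (q k)}) := hcard (g (q k))
      rw [Cardinal.two_le_iff' (⟨q k, rfl⟩ : (g ⁻¹' {g (q k)} : Set ℕ))] at h2
      obtain ⟨b, hb⟩ := h2
      exact ⟨b.1, fun h => hb (Subtype.ext h), b.2⟩
    choose m hm hgm using key
    set qs : ℕ → (ℕ → ℕ) := fun k => Function.update q k (m k) with hqs
    have hmem : ∀ k, qs k ∈ branches (schemeComp V g) x \ {q} := by
      intro k
      constructor
      · show x ∈ fruit (schemeComp V g) (qs k)
        rw [fruit_schemeComp]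
        have : g ∘ qs k = g ∘ q := by
          funext i
          by_cases hik : i = k
          · subst hik; simp [qs, hgm]
          · simp [qs, Function.update_of_ne hik]
        rw [this, ← fruit_schemeComp]
        exact hq
      · simp only [mem_singleton_iff]
        intro h
        exact hm k (by simpa [qs] using congrFun h k)
    have htend : Filter.Tendsto qs Filter.atTop (nhds q) := by
      rw [tendsto_pi_nhds]
      intro i
      refine tendsto_const_nhds.congr' ?_
      filter_upwards [Filter.eventually_gt_atTop i] with k hk
      simp [qs, Function.update_of_ne (by omega : i ≠ k)]
    exact mem_closure_of_tendsto htend (Filter.Eventually.of_forall hmem)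
  · intro hV a
    constructor
    · intro b _
      exact (hV (b.map g)).1 (b.map g) List.prefix_rfl
    · intro U hU hUV
      obtain ⟨b', hpre, hsub⟩ := (hV (a.map g)).2 U hU (by simpa [schemeComp] using hUV)
      obtain ⟨t, rfl⟩ := hpre
      refine ⟨a ++ t.map (fun n => (hg n).choose), ⟨_, rfl⟩, ?_⟩
      have hmap : (a ++ t.map (fun n => (hg n).choose)).map g = a.map g ++ t := by
        simp [map_choose_surj hg t]
      simpa [schemeComp, hmap] using hsub
end PiSpacePaper
end
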